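/- Assume d ≥ 1, L ≥ 1, γ > 0, λ > 0. The set of points (κ, ν) ∈ [−1, 1]² satisfying both (1 − κ²)·∂κR(κ, ν) = 0 and (1 − ν²)·∂νR(κ, ν) = 0 is exactly the five-point set {(0, 0), (1, 1), (1, −1), (−1, 1), (−1, −1)}. -/

import Mathlib

open MeasureTheory ProbabilityTheory Real Filter

noncomputable def erf (u : ℝ) : ℝ := 2 / Real.sqrt Real.pi * ∫ r in (0:ℝ)..u, Real.exp (-r ^ 2)

noncomputable def zeta (t s : ℝ) : ℝ := ∫ g, erf (t + g) ^ 2 ∂(gaussianReal 0 s.toNNReal)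

/-- The reduced risk `R(κ, ν)` on the invariant manifold. -/
noncomputable def Rred (d L : ℕ) (γ lam ε : ℝ) (κ ν : ℝ) : ℝ :=
  γ ^ 2 - 2 * γ ^ 2 * ν * erf (lam * Real.sqrt ((d : ℝ) / 2) * κ /
      Real.sqrt (1 + 2 * lam ^ 2 * γ ^ 2))
    + γ ^ 2 * zeta (lam * Real.sqrt ((d : ℝ) / 2) * κ) (lam ^ 2 * γ ^ 2)
    + ((L : ℝ) - 1) * zeta 0 (lam ^ 2) + ε ^ 2

/-- Partial derivative `∂κR` of the reduced risk with respect to its first argument. -/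
noncomputable def dkR (d L : ℕ) (γ lam ε : ℝ) (κ ν : ℝ) : ℝ :=
  deriv (fun x => Rred d L γ lam ε x ν) κ

/-- Partial derivative `∂νR` of the reduced risk with respect to its second argument. -/
noncomputable def dvR (d L : ℕ) (γ lam ε : ℝ) (κ ν : ℝ) : ℝ :=
  deriv (fun y => Rred d L γ lam ε κ y) ν

/-- The PGD map `g_α`. -/
noncomputable def pgd (d L : ℕ) (γ lam ε α : ℝ) (p : ℝ × ℝ) : ℝ × ℝ :=
  ((p.1 - α * dkR d L γ lam ε p.1 p.2 * (1 - p.1 ^ 2)) /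
      Real.sqrt (1 + α ^ 2 * (dkR d L γ lam ε p.1 p.2) ^ 2 * (1 - p.1 ^ 2)),
   (p.2 - α * dvR d L γ lam ε p.1 p.2 * (1 - p.2 ^ 2)) /
      Real.sqrt (1 + α ^ 2 * (dvR d L γ lam ε p.1 p.2) ^ 2 * (1 - p.2 ^ 2)))

/-- The square `[−1, 1]²`. -/
def sqIcc : Set (ℝ × ℝ) := {p | p.1 ∈ Set.Icc (-1 : ℝ) 1 ∧ p.2 ∈ Set.Icc (-1 : ℝ) 1}

/-!
Write `b = λ√(d/2)`, `s = λ²γ²`, `q = √(1 + 2s)` and `G ~ N(0, s)`. Then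
`∂νR = -2γ² erf(bκ/q)`, which vanishes only at `κ = 0`, and
`∂κR = γ² b (ζ'(bκ) - 2ν erf'(bκ/q)/q)` with `ζ'(t) = E[2 erf(t+G) erf'(t+G)]`.
Completing the square gives `E[erf'(t+G)] = erf'(t/q)/q`, so `|erf| < 1` yields
`|ζ'(t)| < 2 erf'(t/q)/q`: hence `∂κR ≠ 0` whenever `ν = ±1`. Off the corners this leaves
`κ = 0`, where `ζ'(0) = 0` by the symmetry of `G`, and then `∂κR = 0` forces `ν = 0`.
-/

noncomputable def erfDeriv (u : ℝ) : ℝ := 2 / √π * exp (-u ^ 2)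

section Erf

lemma erfDeriv_pos (u : ℝ) : 0 < erfDeriv u := by unfold erfDeriv; positivity

lemma erfDeriv_le (u : ℝ) : erfDeriv u ≤ 2 / √π :=
  mul_le_of_le_one_right (by positivity) (exp_le_one_iff.2 (by nlinarith [sq_nonneg u]))

lemma erfDeriv_neg (u : ℝ) : erfDeriv (-u) = erfDeriv u := by simp [erfDeriv]

@[fun_prop] lemma continuous_erfDeriv : Continuous erfDeriv := by unfold erfDeriv; fun_prop

lemma hasDerivAt_erf (u : ℝ) : HasDerivAt erf (erfDeriv u) u :=
  ((Continuous.integral_hasStrictDerivAt (by fun_prop) 0 u).hasDerivAt).const_mul (2 / √π)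

@[fun_prop] lemma continuous_erf : Continuous erf :=
  continuous_iff_continuousAt.2 fun u => (hasDerivAt_erf u).continuousAt

lemma erf_zero : erf 0 = 0 := by simp [erf]

lemma strictMono_erf : StrictMono erf :=
  strictMono_of_deriv_pos fun u => (hasDerivAt_erf u).deriv ▸ erfDeriv_pos u

lemma erf_neg (u : ℝ) : erf (-u) = -erf u := by
  have h := intervalIntegral.integral_comp_neg (a := 0) (b := -u) (fun r : ℝ => exp (-r ^ 2))
  simp only [neg_sq, neg_zero, neg_neg] at h
  rw [erf, erf, h, intervalIntegral.integral_symm, mul_neg]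

lemma tendsto_erf_atTop : Tendsto erf atTop (nhds 1) := by
  have h := intervalIntegral_tendsto_integral_Ioi 0
    (integrable_exp_neg_mul_sq one_pos).integrableOn tendsto_id
  have hIoi : ∫ r in Set.Ioi (0 : ℝ), exp (-1 * r ^ 2) = √π / 2 := by
    simpa using integral_gaussian_Ioi 1
  rw [hIoi] at h
  convert h.const_mul (2 / √π) using 2
  · simp [erf]
  · field_simp

lemma erf_lt_one (u : ℝ) : erf u < 1 :=
  (strictMono_erf (lt_add_one u)).trans_le
    (strictMono_erf.monotone.ge_of_tendsto tendsto_erf_atTop _)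

lemma abs_erf_lt_one (u : ℝ) : |erf u| < 1 :=
  abs_lt.2 ⟨by linarith [erf_neg u ▸ erf_lt_one (-u)], erf_lt_one u⟩

lemma erf_eq_zero_iff {u : ℝ} : erf u = 0 ↔ u = 0 :=
  strictMono_erf.injective.eq_iff' erf_zero

end Erf

section Gaussian

lemma integral_lt_integral_of_forall_lt {α : Type*} [MeasurableSpace α] {μ : Measure α}
    [NeZero μ] {f g : α → ℝ} (hf : Integrable f μ) (hg : Integrable g μ) (h : ∀ x, f x < g x) :
    ∫ x, f x ∂μ < ∫ x, g x ∂μ := by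
  have hpos := (integral_pos_iff_support_of_nonneg (fun x => (sub_pos.2 (h x)).le) (hg.sub hf)).2
    (by rw [Set.eq_univ_of_forall fun x => Function.mem_support.2 (sub_pos.2 (h x)).ne']
        simpa using NeZero.ne μ)
  rw [integral_sub hg hf] at hpos
  linarith

lemma integral_gaussianReal_eq_zero_of_odd {v : NNReal} {f : ℝ → ℝ} (hf : ∀ x, f (-x) = -f x) :
    ∫ x, f x ∂(gaussianReal 0 v) = 0 := by
  have h : ∫ x, f x ∂(gaussianReal 0 v) = ∫ x, f (-x) ∂(gaussianReal 0 v) := by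
    conv_lhs => rw [← neg_zero, ← gaussianReal_map_neg]
    exact integral_map_equiv (MeasurableEquiv.neg ℝ) f
  simp only [hf, integral_neg] at h
  linarith

lemma integral_exp_neg_sq_add_gaussianReal {v : NNReal} (hv : v ≠ 0) (t : ℝ) :
    ∫ g, exp (-(t + g) ^ 2) ∂(gaussianReal 0 v) = exp (-t ^ 2 / (1 + 2 * v)) / √(1 + 2 * v) := by
  set a : ℝ := (1 + 2 * v) / (2 * v)
  have hpt : ∀ g, gaussianPDFReal 0 v g • exp (-(t + g) ^ 2)
      = ((√(2 * π * v))⁻¹ * exp (-t ^ 2 / (1 + 2 * v))) * exp (-a * (g + t / a) ^ 2) := by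
    intro g
    simp only [gaussianPDFReal, smul_eq_mul, mul_assoc, ← exp_add]
    congr 2
    simp only [a]
    field_simp
    ring
  rw [integral_gaussianReal_eq_integral_smul hv, funext hpt, integral_const_mul,
    integral_add_right_eq_self (fun g => exp (-a * g ^ 2)), integral_gaussian]
  have hsqrt : √(π / a) = √(2 * π * v) / √(1 + 2 * v) := by
    rw [← sqrt_div (by positivity)]
    congr 1
    simp only [a]
    field_simp
  rw [hsqrt]
  field_simp

end Gaussian

section Zeta

noncomputable def zetaDeriv (t s : ℝ) : ℝ :=
  ∫ g, 2 * erf (t + g) * erfDeriv (t + g) ∂(gaussianReal 0 s.toNNReal)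

lemma abs_two_mul_erf_mul_erfDeriv_le (u : ℝ) : |2 * erf u * erfDeriv u| ≤ 2 * (2 / √π) := by
  rw [abs_mul, abs_mul, abs_two, abs_of_pos (erfDeriv_pos u)]
  nlinarith [abs_erf_lt_one u, erfDeriv_le u, erfDeriv_pos u]

lemma hasDerivAt_zeta (t s : ℝ) : HasDerivAt (fun t => zeta t s) (zetaDeriv t s) t := by
  have hF : ∀ x g : ℝ,
      HasDerivAt (fun x => erf (x + g) ^ 2) (2 * erf (x + g) * erfDeriv (x + g)) x := fun x g => by
    simpa [mul_assoc] using ((hasDerivAt_erf (x + g)).comp_add_const x g).fun_pow 2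
  exact (hasDerivAt_integral_of_dominated_loc_of_deriv_le (Metric.ball_mem_nhds t one_pos)
    (Eventually.of_forall fun x => by fun_prop)
    (.of_bound (by fun_prop) 1 (ae_of_all _ fun g => by
      simpa [abs_pow] using pow_le_one₀ (abs_nonneg _) (abs_erf_lt_one (t + g)).le (n := 2)))
    (by fun_prop)
    (ae_of_all _ fun g x _ => abs_two_mul_erf_mul_erfDeriv_le (x + g))
    (integrable_const _)
    (ae_of_all _ fun g x _ => hF x g)).2

lemma zetaDeriv_zero_left (s : ℝ) : zetaDeriv 0 s = 0 :=
  integral_gaussianReal_eq_zero_of_odd fun g => by simp [erf_neg, erfDeriv_neg]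

lemma integral_erfDeriv_add_gaussianReal {s : ℝ} (hs : 0 < s) (t : ℝ) :
    ∫ g, erfDeriv (t + g) ∂(gaussianReal 0 s.toNNReal)
      = erfDeriv (t / √(1 + 2 * s)) / √(1 + 2 * s) := by
  have hv : s.toNNReal ≠ 0 := by simpa using hs
  simp only [erfDeriv, integral_const_mul, integral_exp_neg_sq_add_gaussianReal hv,
    Real.coe_toNNReal _ hs.le, div_pow, sq_sqrt (by positivity : (0 : ℝ) ≤ 1 + 2 * s)]
  ring_nf

lemma abs_zetaDeriv_lt {s : ℝ} (hs : 0 < s) (t : ℝ) :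
    |zetaDeriv t s| < 2 * (erfDeriv (t / √(1 + 2 * s)) / √(1 + 2 * s)) := by
  have hE : Integrable (fun g => 2 * erfDeriv (t + g)) (gaussianReal 0 s.toNNReal) :=
    .of_bound (by fun_prop) (2 * (2 / √π)) (ae_of_all _ fun g => by
      rw [Real.norm_eq_abs, abs_of_pos (by linarith [erfDeriv_pos (t + g)])]
      linarith [erfDeriv_le (t + g)])
  have hD : Integrable (fun g => 2 * erf (t + g) * erfDeriv (t + g)) (gaussianReal 0 s.toNNReal) :=
    .of_bound (by fun_prop) _ (ae_of_all _ fun g => abs_two_mul_erf_mul_erfDeriv_le (t + g))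
  rw [← integral_erfDeriv_add_gaussianReal hs, ← integral_const_mul, abs_lt, zetaDeriv,
    ← integral_neg]
  refine ⟨integral_lt_integral_of_forall_lt hE.neg hD fun g => ?_,
    integral_lt_integral_of_forall_lt hD hE fun g => ?_⟩ <;>
  nlinarith [abs_lt.1 (abs_erf_lt_one (t + g)), erfDeriv_pos (t + g)]

end Zeta

section ReducedRisk

variable (d L : ℕ) (γ lam ε κ ν : ℝ)

lemma dvR_eq :
    dvR d L γ lam ε κ ν
      = -(2 * γ ^ 2) * erf (lam * √((d : ℝ) / 2) * κ / √(1 + 2 * lam ^ 2 * γ ^ 2)) := by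
  unfold dvR Rred
  simp

lemma dkR_eq :
    dkR d L γ lam ε κ ν = γ ^ 2 * (lam * √((d : ℝ) / 2)) *
      (zetaDeriv (lam * √((d : ℝ) / 2) * κ) (lam ^ 2 * γ ^ 2)
        - 2 * ν * (erfDeriv (lam * √((d : ℝ) / 2) * κ / √(1 + 2 * lam ^ 2 * γ ^ 2))
          / √(1 + 2 * lam ^ 2 * γ ^ 2))) := by
  set b := lam * √((d : ℝ) / 2)
  set q := √(1 + 2 * lam ^ 2 * γ ^ 2)
  have herf : HasDerivAt (fun x => erf (b * x / q)) (erfDeriv (b * κ / q) * (b / q)) κ :=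
    (hasDerivAt_erf _).comp κ (by simpa using ((hasDerivAt_id κ).const_mul b).div_const q)
  have hzeta : HasDerivAt (fun x => zeta (b * x) (lam ^ 2 * γ ^ 2))
      (zetaDeriv (b * κ) (lam ^ 2 * γ ^ 2) * b) κ :=
    (hasDerivAt_zeta _ _).comp κ (by simpa using (hasDerivAt_id κ).const_mul b)
  have hR := (((herf.const_mul (2 * γ ^ 2 * ν)).const_sub (γ ^ 2)).fun_add
    (hzeta.const_mul (γ ^ 2))).add_const (((L : ℝ) - 1) * zeta 0 (lam ^ 2)) |>.add_const (ε ^ 2)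
  unfold dkR Rred
  rw [hR.deriv]
  ring

end ReducedRisk

lemma critical_points_iff {κ ν z m e c₁ c₂ : ℝ} (hc₁ : c₁ ≠ 0) (hc₂ : c₂ ≠ 0)
    (hz : |z| < 2 * m) (he : e = 0 ↔ κ = 0) (hz₀ : κ = 0 → z = 0) :
    ((κ ∈ Set.Icc (-1) 1 ∧ ν ∈ Set.Icc (-1) 1) ∧
        (1 - κ ^ 2) * (c₁ * (z - 2 * ν * m)) = 0 ∧ (1 - ν ^ 2) * (c₂ * e) = 0) ↔
      (κ = 0 ∧ ν = 0) ∨ (κ = 1 ∧ ν = 1) ∨ (κ = 1 ∧ ν = -1) ∨ (κ = -1 ∧ ν = 1) ∨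
        (κ = -1 ∧ ν = -1) := by
  have hm : 0 < m := by linarith [abs_nonneg z]
  have one_sub_sq : ∀ x : ℝ, 1 - x ^ 2 = 0 ↔ x = 1 ∨ x = -1 := fun x => by
    rw [sub_eq_zero, eq_comm, sq_eq_one_iff]
  simp only [mul_eq_zero, hc₁, hc₂, false_or, one_sub_sq, sub_eq_zero]
  constructor
  · rintro ⟨-, hκ, hν | he₀⟩
    · rcases hκ with hκ | hzm
      · rcases hκ with rfl | rfl <;> rcases hν with rfl | rfl <;> simp
      · rcases hν with rfl | rfl <;> rw [hzm, abs_lt] at hz <;> linarith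
    · obtain rfl := he.1 he₀
      rcases hκ with hκ | hzm
      · rcases hκ with h | h <;> norm_num at h
      · rw [hz₀ rfl] at hzm
        exact Or.inl ⟨rfl, by nlinarith⟩
  · rintro (⟨rfl, rfl⟩ | ⟨rfl, rfl⟩ | ⟨rfl, rfl⟩ | ⟨rfl, rfl⟩ | ⟨rfl, rfl⟩) <;> norm_num
    exact ⟨hz₀ rfl, he.2 rfl⟩

theorem stmt4_general (d L : ℕ) (hd : 1 ≤ d) (γ lam ε : ℝ)
    (hγ : 0 < γ) (hlam : 0 < lam) :
    {p : ℝ × ℝ | p ∈ sqIcc ∧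
        (1 - p.1 ^ 2) * dkR d L γ lam ε p.1 p.2 = 0 ∧
        (1 - p.2 ^ 2) * dvR d L γ lam ε p.1 p.2 = 0}
      = {((0 : ℝ), (0 : ℝ)), (1, 1), (1, -1), (-1, 1), (-1, -1)} := by
  have hs : 0 < lam ^ 2 * γ ^ 2 := by positivity
  have hb : 0 < lam * √((d : ℝ) / 2) :=
    mul_pos hlam (sqrt_pos.2 (div_pos (Nat.cast_pos.2 hd) two_pos))
  have hq : 0 < √(1 + 2 * lam ^ 2 * γ ^ 2) := by positivity
  ext ⟨κ, ν⟩
  simp only [sqIcc, Set.mem_ofPred_eq, Set.mem_insert_iff, Set.mem_singleton_iff, Prod.mk.injEq,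
    dkR_eq, dvR_eq]
  refine critical_points_iff (mul_pos (by positivity) hb).ne' (neg_neg_of_pos (by positivity)).ne
    ?_ ?_ ?_
  · simpa only [mul_assoc] using abs_zetaDeriv_lt hs (lam * √((d : ℝ) / 2) * κ)
  · rw [erf_eq_zero_iff, div_eq_zero_iff, mul_eq_zero]
    simp only [hb.ne', hq.ne', false_or, or_false]
  · rintro rfl
    simpa using zetaDeriv_zero_left (lam ^ 2 * γ ^ 2)

/-- The points of `[−1,1]²` where both `(1−κ²)·∂κR` and `(1−ν²)·∂νR` vanish are exactly
the five points `(0,0)`, `(1,1)`, `(1,−1)`, `(−1,1)`, `(−1,−1)`. -/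
theorem stmt4 (d L : ℕ) (hd : 1 ≤ d) (hL : 1 ≤ L) (γ lam ε : ℝ)
    (hγ : 0 < γ) (hlam : 0 < lam) (hε : 0 ≤ ε) :
    {p : ℝ × ℝ | p ∈ sqIcc ∧
        (1 - p.1 ^ 2) * dkR d L γ lam ε p.1 p.2 = 0 ∧
        (1 - p.2 ^ 2) * dvR d L γ lam ε p.1 p.2 = 0}
      = {((0 : ℝ), (0 : ℝ)), (1, 1), (1, -1), (-1, 1), (-1, -1)} :=
  stmt4_general d L hd γ lam ε hγ hlam
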